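/- arXiv:2210.04488 — 3 statements merged into one kernel-verified Lean document; each statement's English description precedes it below -/
import Mathlib

section
/- For all real numbers ℓ > 0, ϑ ≥ 0 and c, s with c² + s² = 1, the operator norm of the pivot matrix satisfies ‖M(ℓ,ϑ,c,s)‖_O = (|ℓ − ϑ| + √((ℓ − ϑ)² + 4ϑℓs²))/2. -/
/-- The 2×2 pivot matrix M(ℓ,ϑ,c,s) = A − B with A = diag(ℓ,0), B = ϑ·[[c²,cs],[cs,s²]]. -/
noncomputable def pivotM (l θ c s : ℝ) : Matrix (Fin 2) (Fin 2) ℝ :=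
  !![l - θ * c ^ 2, -(θ * c * s); -(θ * c * s), -(θ * s ^ 2)]

/-- Frobenius norm: square root of the sum of squares of the entries. -/
noncomputable def frobNorm (A : Matrix (Fin 2) (Fin 2) ℝ) : ℝ :=
  Real.sqrt (∑ i, ∑ j, (A i j) ^ 2)

/-- Operator norm: the ℓ²→ℓ² operator norm, i.e. the largest singular value. -/
noncomputable def opNorm (A : Matrix (Fin 2) (Fin 2) ℝ) : ℝ :=
  ‖LinearMap.toContinuousLinearMap (Matrix.toEuclideanLin A)‖

/-- Nuclear norm: the trace of √(AᴴA), i.e. the sum of the singular values. -/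
noncomputable def nucNorm (A : Matrix (Fin 2) (Fin 2) ℝ) : ℝ :=
  ((Matrix.posSemidef_conjTranspose_mul_self A).1.eigenvectorUnitary.1 *
    Matrix.diagonal (fun i => Real.sqrt ((Matrix.posSemidef_conjTranspose_mul_self A).1.eigenvalues i)) *
    (star (Matrix.posSemidef_conjTranspose_mul_self A).1.eigenvectorUnitary : Matrix (Fin 2) (Fin 2) ℝ)).trace

lemma euclid_norm_eq (x : EuclideanSpace ℝ (Fin 2)) :
    ‖x‖ = Real.sqrt ((x 0) ^ 2 + (x 1) ^ 2) := by
  rw [EuclideanSpace.norm_eq]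
  simp [Fin.sum_univ_two, sq_abs]

lemma toEuc_apply (A : Matrix (Fin 2) (Fin 2) ℝ) (x : EuclideanSpace ℝ (Fin 2)) (i : Fin 2) :
    (Matrix.toEuclideanLin A x) i = A i 0 * x 0 + A i 1 * x 1 := by
  rw [Matrix.toEuclideanLin_apply]
  simp [Matrix.mulVec, dotProduct, Fin.sum_univ_two]

lemma euclid_vec_apply (v : Fin 2 → ℝ) (i : Fin 2) :
    ((WithLp.equiv 2 (Fin 2 → ℝ)).symm v) i = v i := rfl

lemma euclid_vec_ne_zero (v : Fin 2 → ℝ) (i : Fin 2) (hv : v i ≠ 0) :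
    ((WithLp.equiv 2 (Fin 2 → ℝ)).symm v : EuclideanSpace ℝ (Fin 2)) ≠ 0 := by
  intro hc
  apply hv
  have : ((WithLp.equiv 2 (Fin 2 → ℝ)).symm v : EuclideanSpace ℝ (Fin 2)) i = 0 := by
    rw [hc]; rfl
  rwa [euclid_vec_apply] at this

lemma half_abs_add (a d : ℝ) : (|a + d| + |a - d|) / 2 = max |a| |d| := by
  rcases le_total |a| |d| with hc | hc
  · rw [max_eq_right hc]
    rcases abs_cases (a + d) with ⟨e1, _⟩ | ⟨e1, _⟩ <;>
      rcases abs_cases (a - d) with ⟨e2, _⟩ | ⟨e2, _⟩ <;>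
      rcases abs_cases a with ⟨e3, _⟩ | ⟨e3, _⟩ <;>
      rcases abs_cases d with ⟨e4, _⟩ | ⟨e4, _⟩ <;> linarith
  · rw [max_eq_left hc]
    rcases abs_cases (a + d) with ⟨e1, _⟩ | ⟨e1, _⟩ <;>
      rcases abs_cases (a - d) with ⟨e2, _⟩ | ⟨e2, _⟩ <;>
      rcases abs_cases a with ⟨e3, _⟩ | ⟨e3, _⟩ <;>
      rcases abs_cases d with ⟨e4, _⟩ | ⟨e4, _⟩ <;> linarith

set_option maxHeartbeats 1600000 in
lemma opNorm_sym2 (a b d : ℝ) :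
    opNorm !![a, b; b, d] =
      (|a + d| + Real.sqrt ((a - d) ^ 2 + 4 * b ^ 2)) / 2 := by
  have hD : 0 ≤ (a - d) ^ 2 + 4 * b ^ 2 := by positivity
  set S := Real.sqrt ((a - d) ^ 2 + 4 * b ^ 2) with hSdef
  have hS2 : S ^ 2 = (a - d) ^ 2 + 4 * b ^ 2 := Real.sq_sqrt hD
  have hS0 : 0 ≤ S := Real.sqrt_nonneg _
  have hSad : |a - d| ≤ S := by
    rw [hSdef, ← Real.sqrt_sq_eq_abs]
    exact Real.sqrt_le_sqrt (by nlinarith)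
  set r := (|a + d| + S) / 2 with hrdef
  have hr0 : 0 ≤ r := by positivity
  set M : Matrix (Fin 2) (Fin 2) ℝ := !![a, b; b, d] with hM
  set f := LinearMap.toContinuousLinearMap (Matrix.toEuclideanLin M) with hf
  have hfapply : ∀ x : EuclideanSpace ℝ (Fin 2),
      f x 0 = a * x 0 + b * x 1 ∧ f x 1 = b * x 0 + d * x 1 := by
    intro x
    refine ⟨?_, ?_⟩
    · have := toEuc_apply M x 0
      exact this
    · have := toEuc_apply M x 1
      exact this
  -- upper bound
  have hub : ∀ x : EuclideanSpace ℝ (Fin 2), ‖f x‖ ≤ r * ‖x‖ := by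
    intro x
    obtain ⟨h0, h1⟩ := hfapply x
    set x0 := x 0
    set x1 := x 1
    have hE : |(a - d) * (x0 ^ 2 - x1 ^ 2) + 4 * b * (x0 * x1)| ≤ S * (x0 ^ 2 + x1 ^ 2) := by
      have hsq : ((a - d) * (x0 ^ 2 - x1 ^ 2) + 4 * b * (x0 * x1)) ^ 2
          ≤ (S * (x0 ^ 2 + x1 ^ 2)) ^ 2 := by
        rw [mul_pow, hS2]
        nlinarith [sq_nonneg ((a - d) * (2 * x0 * x1) - 2 * b * (x0 ^ 2 - x1 ^ 2))]
      calc |(a - d) * (x0 ^ 2 - x1 ^ 2) + 4 * b * (x0 * x1)|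
          = Real.sqrt (((a - d) * (x0 ^ 2 - x1 ^ 2) + 4 * b * (x0 * x1)) ^ 2) :=
            (Real.sqrt_sq_eq_abs _).symm
        _ ≤ Real.sqrt ((S * (x0 ^ 2 + x1 ^ 2)) ^ 2) := Real.sqrt_le_sqrt hsq
        _ = S * (x0 ^ 2 + x1 ^ 2) := by
            rw [Real.sqrt_sq (by positivity)]
    have hTE : (a + d) * ((a - d) * (x0 ^ 2 - x1 ^ 2) + 4 * b * (x0 * x1))
        ≤ |a + d| * (S * (x0 ^ 2 + x1 ^ 2)) := by
      calc (a + d) * ((a - d) * (x0 ^ 2 - x1 ^ 2) + 4 * b * (x0 * x1))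
          ≤ |(a + d) * ((a - d) * (x0 ^ 2 - x1 ^ 2) + 4 * b * (x0 * x1))| := le_abs_self _
        _ = |a + d| * |(a - d) * (x0 ^ 2 - x1 ^ 2) + 4 * b * (x0 * x1)| := abs_mul _ _
        _ ≤ |a + d| * (S * (x0 ^ 2 + x1 ^ 2)) :=
            mul_le_mul_of_nonneg_left hE (abs_nonneg _)
    have hkey : (a * x0 + b * x1) ^ 2 + (b * x0 + d * x1) ^ 2
        ≤ r ^ 2 * (x0 ^ 2 + x1 ^ 2) := by
      have hT2 : |a + d| ^ 2 = (a + d) ^ 2 := sq_abs _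
      rw [hrdef]
      nlinarith [hTE, hS2, hT2]
    rw [euclid_norm_eq, euclid_norm_eq, h0, h1, ← Real.sqrt_sq hr0,
      ← Real.sqrt_mul (by positivity)]
    exact Real.sqrt_le_sqrt hkey
  -- lower bound: an eigenvector achieving the norm
  have hlb : ∃ v : EuclideanSpace ℝ (Fin 2), v ≠ 0 ∧ ‖f v‖ = r * ‖v‖ := by
    by_cases hb : b = 0
    · subst hb
      have hS' : S = |a - d| := by
        rw [hSdef, ← Real.sqrt_sq_eq_abs]
        norm_num
      rcases le_total |a| |d| with hcmp | hcmp
      · refine ⟨(WithLp.equiv 2 (Fin 2 → ℝ)).symm ![0, 1],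
          euclid_vec_ne_zero _ 1 (by norm_num), ?_⟩
        obtain ⟨h0, h1⟩ := hfapply ((WithLp.equiv 2 (Fin 2 → ℝ)).symm ![0, 1])
        rw [euclid_norm_eq, euclid_norm_eq, h0, h1]
        simp only [euclid_vec_apply, Matrix.cons_val_zero, Matrix.cons_val_one,
          Matrix.head_cons]
        have hr : r = |d| := by
          rw [hrdef, hS', half_abs_add, max_eq_right hcmp]
        rw [hr]
        norm_num [Real.sqrt_sq_eq_abs]
      · refine ⟨(WithLp.equiv 2 (Fin 2 → ℝ)).symm ![1, 0],
          euclid_vec_ne_zero _ 0 (by norm_num), ?_⟩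
        obtain ⟨h0, h1⟩ := hfapply ((WithLp.equiv 2 (Fin 2 → ℝ)).symm ![1, 0])
        rw [euclid_norm_eq, euclid_norm_eq, h0, h1]
        simp only [euclid_vec_apply, Matrix.cons_val_zero, Matrix.cons_val_one,
          Matrix.head_cons]
        have hr : r = |a| := by
          rw [hrdef, hS', half_abs_add, max_eq_left hcmp]
        rw [hr]
        norm_num [Real.sqrt_sq_eq_abs]
    · -- b ≠ 0 : eigenvector (b, λ - a) for the eigenvalue λ of largest modulus
      set lam : ℝ := if 0 ≤ a + d then (a + d + S) / 2 else (a + d - S) / 2 with hlam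
      have hlamabs : |lam| = r := by
        rw [hlam, hrdef]
        split_ifs with hs
        · rw [abs_of_nonneg (by positivity), abs_of_nonneg hs]
        · push_neg at hs
          rw [abs_of_nonpos (by nlinarith [hSad, le_abs_self (a - d)]), abs_of_neg hs]
          ring
      have hchar : lam ^ 2 - (a + d) * lam + (a * d - b ^ 2) = 0 := by
        rw [hlam]; split_ifs <;> nlinarith [hS2]
      refine ⟨(WithLp.equiv 2 (Fin 2 → ℝ)).symm ![b, lam - a],
        euclid_vec_ne_zero _ 0 (by simpa using hb), ?_⟩
      obtain ⟨h0, h1⟩ := hfapply ((WithLp.equiv 2 (Fin 2 → ℝ)).symm ![b, lam - a])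
      rw [euclid_norm_eq, euclid_norm_eq, h0, h1]
      simp only [euclid_vec_apply, Matrix.cons_val_zero, Matrix.cons_val_one,
        Matrix.head_cons]
      rw [show a * b + b * (lam - a) = lam * b by ring,
        show b * b + d * (lam - a) = lam * (lam - a) by nlinarith [hchar],
        show (lam * b) ^ 2 + (lam * (lam - a)) ^ 2 = lam ^ 2 * (b ^ 2 + (lam - a) ^ 2) by ring,
        Real.sqrt_mul (by positivity), Real.sqrt_sq_eq_abs, hlamabs]
  -- combine
  have key : ‖f‖ = r := by
    refine le_antisymm (f.opNorm_le_bound hr0 hub) ?_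
    obtain ⟨v, hv0, hveq⟩ := hlb
    have hvpos : 0 < ‖v‖ := norm_pos_iff.mpr hv0
    have := f.le_opNorm v
    rw [hveq] at this
    exact le_of_mul_le_mul_right (by linarith) hvpos
  simpa [opNorm, hf] using key

theorem opNorm_pivot (l θ c s : ℝ) (hl : 0 < l) (hθ : 0 ≤ θ) (h : c ^ 2 + s ^ 2 = 1) :
    opNorm (pivotM l θ c s) =
      (|l - θ| + Real.sqrt ((l - θ) ^ 2 + 4 * θ * l * s ^ 2)) / 2 := by
  have h1 : pivotM l θ c s = !![l - θ * c ^ 2, -(θ * c * s); -(θ * c * s), -(θ * s ^ 2)] := rfl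
  rw [h1, opNorm_sym2]
  have h2 : l - θ * c ^ 2 + -(θ * s ^ 2) = l - θ := by linear_combination (-θ) * h
  have h3 : (l - θ * c ^ 2 - -(θ * s ^ 2)) ^ 2 + 4 * (-(θ * c * s)) ^ 2
      = (l - θ) ^ 2 + 4 * θ * l * s ^ 2 := by
    linear_combination (θ^2*c^2 + θ^2*s^2 + θ^2 - 2*θ*l) * h
  rw [h2, h3]
end

section
/- For every ℓ̄ > 0, the function ϑ ↦ L̄_F(ℓ̄, ϑ) on ℝ has a unique global minimizer, namely ϑ* = ℓ̄²/(1 + ℓ̄), and the minimal value satisfies L̄_F(ℓ̄, ϑ*)² = ℓ̄²(2ℓ̄ + 1)/(ℓ̄ + 1)². -/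
/-- Limiting cosine c̄(ℓ̄) in the γ → ∞ disproportional framework. -/
noncomputable def cBar (l : ℝ) : ℝ := Real.sqrt (l / (1 + l))

/-- Limiting sine s̄(ℓ̄) = √(1/(1+ℓ̄)). -/
noncomputable def sBar (l : ℝ) : ℝ := Real.sqrt (1 / (1 + l))

/-- Asymptotic Frobenius loss L̄_F(ℓ̄, ϑ). -/
noncomputable def lossBarF (l θ : ℝ) : ℝ := frobNorm (pivotM l θ (cBar l) (sBar l))

/-- Asymptotic operator-norm loss L̄_O(ℓ̄, ϑ). -/
noncomputable def lossBarO (l θ : ℝ) : ℝ := opNorm (pivotM l θ (cBar l) (sBar l))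

/-- Asymptotic nuclear-norm loss L̄_N(ℓ̄, ϑ). -/
noncomputable def lossBarN (l θ : ℝ) : ℝ := nucNorm (pivotM l θ (cBar l) (sBar l))


lemma lossBarF_eq (l θ : ℝ) (hl : 0 < l) :
    lossBarF l θ = Real.sqrt ((θ - l ^ 2 / (1 + l)) ^ 2 + l ^ 2 * (2 * l + 1) / (l + 1) ^ 2) := by
  have h1 : (0:ℝ) < 1 + l := by linarith
  have hc : cBar l ^ 2 = l / (1 + l) :=
    Real.sq_sqrt (div_nonneg hl.le h1.le)
  have hs : sBar l ^ 2 = 1 / (1 + l) :=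
    Real.sq_sqrt (div_nonneg zero_le_one h1.le)
  have hkey : (∑ i, ∑ j, (pivotM l θ (cBar l) (sBar l) i j) ^ 2)
      = (θ - l ^ 2 / (1 + l)) ^ 2 + l ^ 2 * (2 * l + 1) / (l + 1) ^ 2 := by
    simp only [pivotM, Fin.sum_univ_two, Matrix.cons_val', Matrix.cons_val_zero,
      Matrix.cons_val_one, Matrix.head_cons, Matrix.empty_val', Matrix.cons_val_fin_one,
      Matrix.head_fin_const, Matrix.of_apply]
    have e1 : (-(θ * cBar l * sBar l)) ^ 2 = θ ^ 2 * cBar l ^ 2 * sBar l ^ 2 := by ring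
    have e2 : (l - θ * cBar l ^ 2) ^ 2 = l ^ 2 - 2 * l * θ * cBar l ^ 2 + θ ^ 2 * (cBar l ^ 2) ^ 2 := by ring
    have e3 : (-(θ * sBar l ^ 2)) ^ 2 = θ ^ 2 * (sBar l ^ 2) ^ 2 := by ring
    rw [e1, e2, e3, hc, hs]
    field_simp
    ring
  rw [lossBarF, frobNorm, hkey]

theorem optimal_frobenius_shrinker_bar (l : ℝ) (hl : 0 < l) :
    (∀ θ : ℝ, θ ≠ l ^ 2 / (1 + l) → lossBarF l (l ^ 2 / (1 + l)) < lossBarF l θ) ∧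
    lossBarF l (l ^ 2 / (1 + l)) ^ 2 = l ^ 2 * (2 * l + 1) / (l + 1) ^ 2 := by
  have hm : (0:ℝ) ≤ l ^ 2 * (2 * l + 1) / (l + 1) ^ 2 := by positivity
  constructor
  · intro θ hθ
    rw [lossBarF_eq l θ hl, lossBarF_eq l _ hl]
    apply Real.sqrt_lt_sqrt
    · nlinarith
    · have : (θ - l ^ 2 / (1 + l)) ^ 2 > 0 := by
        have := sub_ne_zero.mpr hθ
        positivity
      nlinarith
  · rw [lossBarF_eq l _ hl]
    rw [Real.sq_sqrt (by nlinarith)]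
    ring
end

section
/- For γ ≥ 0 define the quintic polynomial P_γ(θ) = (θ² + √γ·θ + 1)²(θ + √γ) − 2θ(θ² + √γ·θ + 1)(θ² − 1). Then P_0(θ) = θ(θ² + 1)(3 − θ²), whose unique positive real root is √3; moreover there exists γ₀ > 0 and a function θ: [0, γ₀] → (0, ∞) such that for every γ ∈ [0, γ₀], θ(γ) is the unique positive real root of P_γ, and θ(γ) → √3 as γ → 0⁺. -/
/-- The quintic polynomial P_γ(θ) from the optimal Frobenius hard-threshold crossing equation. -/
noncomputable def Pq (γ θ : ℝ) : ℝ :=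
  (θ ^ 2 + Real.sqrt γ * θ + 1) ^ 2 * (θ + Real.sqrt γ)
    - 2 * θ * (θ ^ 2 + Real.sqrt γ * θ + 1) * (θ ^ 2 - 1)

noncomputable def qc (s θ : ℝ) : ℝ := -θ^3 + 2*s*θ^2 + (3+s^2)*θ + s

noncomputable def rr (s : ℝ) : ℝ := s + Real.sqrt (3 + 2*s^2)

lemma Pq_factor (γ θ : ℝ) : Pq γ θ = (θ^2 + Real.sqrt γ * θ + 1) * qc (Real.sqrt γ) θ := by
  unfold Pq qc; ring

lemma hw2 (s : ℝ) : (Real.sqrt (3 + 2*s^2))^2 = 3 + 2*s^2 := Real.sq_sqrt (by positivity)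

lemma rr_ge (s : ℝ) (hs : 0 ≤ s) : Real.sqrt 3 ≤ rr s := by
  unfold rr
  have : Real.sqrt 3 ≤ Real.sqrt (3 + 2*s^2) := Real.sqrt_le_sqrt (by nlinarith)
  linarith

lemma sqrt3_pos : 0 < Real.sqrt 3 := Real.sqrt_pos.2 (by norm_num)

lemma qc_pos (s θ : ℝ) (hs : 0 ≤ s) (h0 : 0 < θ) (h1 : θ < rr s) : 0 < qc s θ := by
  have hw := hw2 s
  have hw0 : 0 ≤ Real.sqrt (3 + 2*s^2) := Real.sqrt_nonneg _
  set w := Real.sqrt (3 + 2*s^2)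
  unfold rr at h1
  have hws : s < w := by nlinarith
  have hfac : 0 < (w - (θ - s)) * (w + (θ - s)) := mul_pos (by linarith) (by linarith)
  unfold qc
  nlinarith [mul_pos h0 hfac]

lemma qc_r (s : ℝ) : qc s (rr s) = s := by
  have hw := hw2 s
  unfold qc rr
  linear_combination (-(s + Real.sqrt (3 + 2*s^2))) * hw

lemma qc_cont (s : ℝ) : Continuous (qc s) := by
  unfold qc; fun_prop

lemma qc_anti (s : ℝ) (hs : 0 ≤ s) : StrictAntiOn (qc s) (Set.Ici (rr s)) := by
  have hderiv : ∀ θ : ℝ, HasDerivAt (qc s) (-3*θ^2 + 4*s*θ + (3+s^2)) θ := by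
    intro θ
    have h := (((hasDerivAt_pow 3 θ).neg.add ((hasDerivAt_pow 2 θ).const_mul (2*s))).add
      ((hasDerivAt_id θ).const_mul (3+s^2))).add_const s
    show HasDerivAt (fun x : ℝ => -x^3 + 2*s*x^2 + (3+s^2)*x + s) _ θ
    refine h.congr_deriv ?_
    push_cast; ring
  apply strictAntiOn_of_deriv_neg (convex_Ici _) (qc_cont s).continuousOn
  intro x hx
  rw [interior_Ici] at hx
  rw [(hderiv x).deriv]
  have hw := hw2 s
  have hw0 : 0 ≤ Real.sqrt (3 + 2*s^2) := Real.sqrt_nonneg _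
  set w := Real.sqrt (3 + 2*s^2)
  have hx' : s + w < x := hx
  nlinarith [mul_pos (show (0:ℝ) < x - s by linarith) (show (0:ℝ) < x by linarith)]

lemma root_spec (s : ℝ) (hs : 0 ≤ s) :
    ∃ θ, (rr s ≤ θ ∧ qc s θ = 0) ∧ ∀ t, 0 < t → qc s t = 0 → t = θ := by
  have hw := hw2 s
  have hw0 : 0 ≤ Real.sqrt (3 + 2*s^2) := Real.sqrt_nonneg _
  set w := Real.sqrt (3 + 2*s^2) with hwdef
  set M : ℝ := rr s + s + 2 with hM
  have hrM : rr s ≤ M := by unfold rr at *; linarith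
  have hMneg : qc s M < 0 := by
    have key : qc s M = M * ((3 + 2*s^2) - (M - s)^2) + s := by
      unfold qc; ring
    have hMs : M - s = s + w + 2 := by unfold rr at hM; rw [hM]; ring
    rw [key, hMs]
    have hMpos : (0:ℝ) < M := by unfold rr at hM; rw [hM]; linarith
    nlinarith [mul_nonneg hs hw0, mul_nonneg hs hs]
  have h0mem : (0:ℝ) ∈ Set.Icc (qc s M) (qc s (rr s)) := by
    constructor
    · exact hMneg.le
    · rw [qc_r]; exact hs
  obtain ⟨θ, hθmem, hθ0⟩ := intermediate_value_Icc' hrM (qc_cont s).continuousOn h0mem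
  refine ⟨θ, ⟨hθmem.1, hθ0⟩, ?_⟩
  intro t ht htq
  have htr : rr s ≤ t := by
    by_contra h
    push_neg at h
    exact absurd htq (ne_of_gt (qc_pos s t hs ht h))
  exact (qc_anti s hs).injOn htr hθmem.1 (by rw [htq, hθ0])

noncomputable def thf (γ : ℝ) : ℝ := (root_spec (Real.sqrt γ) (Real.sqrt_nonneg γ)).choose

lemma thf_spec (γ : ℝ) :
    (rr (Real.sqrt γ) ≤ thf γ ∧ qc (Real.sqrt γ) (thf γ) = 0) ∧
      ∀ t, 0 < t → qc (Real.sqrt γ) t = 0 → t = thf γ :=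
  (root_spec (Real.sqrt γ) (Real.sqrt_nonneg γ)).choose_spec

lemma thf_ge (γ : ℝ) : Real.sqrt 3 ≤ thf γ :=
  le_trans (rr_ge _ (Real.sqrt_nonneg γ)) (thf_spec γ).1.1

lemma thf_pos (γ : ℝ) : 0 < thf γ := lt_of_lt_of_le sqrt3_pos (thf_ge γ)

lemma thf_lt (γ : ℝ) (hγ : 0 < γ) (hγ1 : γ ≤ 1/100) :
    thf γ ≤ Real.sqrt 3 + 4 * Real.sqrt γ := by
  set s := Real.sqrt γ with hsdef
  have hs0 : 0 < s := Real.sqrt_pos.2 hγ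
  have hs1 : s ≤ 1/10 := by
    rw [hsdef, show (1:ℝ)/10 = Real.sqrt ((1/10)^2) by rw [Real.sqrt_sq]; norm_num]
    exact Real.sqrt_le_sqrt (by nlinarith)
  have h3 : (Real.sqrt 3)^2 = 3 := Real.sq_sqrt (by norm_num)
  have h3a : 1 ≤ Real.sqrt 3 := by nlinarith [Real.sqrt_nonneg 3]
  have h3b : Real.sqrt 3 ≤ 2 := by nlinarith [Real.sqrt_nonneg 3]
  set t3 := Real.sqrt 3
  -- rr s ≤ t3 + 2s
  have hw := hw2 s
  have hw0 : 0 ≤ Real.sqrt (3 + 2*s^2) := Real.sqrt_nonneg _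
  have hwle : Real.sqrt (3 + 2*s^2) ≤ t3 + s := by
    rw [show t3 + s = Real.sqrt ((t3 + s)^2) by rw [Real.sqrt_sq (by linarith)]]
    exact Real.sqrt_le_sqrt (by nlinarith)
  have hrle : rr s < t3 + 4*s := by unfold rr; linarith
  -- qc s (t3 + 4s) < 0
  have hqneg : qc s (t3 + 4*s) < 0 := by
    unfold qc
    nlinarith [mul_pos hs0 hs0, mul_pos (mul_pos hs0 hs0) hs0,
      mul_pos hs0 (mul_pos hs0 (mul_pos hs0 hs0))]
  by_contra h
  push_neg at h
  have hmem1 : t3 + 4*s ∈ Set.Ici (rr s) := Set.mem_Ici.2 hrle.le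
  have hmem2 : thf γ ∈ Set.Ici (rr s) := Set.mem_Ici.2 (thf_spec γ).1.1
  have := (qc_anti s (Real.sqrt_nonneg γ)) hmem1 hmem2 h
  rw [(thf_spec γ).1.2] at this
  linarith

theorem crossing_quintic_root :
    (∀ θ : ℝ, Pq 0 θ = θ * (θ ^ 2 + 1) * (3 - θ ^ 2)) ∧
    (Pq 0 (Real.sqrt 3) = 0 ∧ ∀ θ : ℝ, 0 < θ → Pq 0 θ = 0 → θ = Real.sqrt 3) ∧
    (∃ γ₀ : ℝ, 0 < γ₀ ∧ ∃ θf : ℝ → ℝ,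
      (∀ γ ∈ Set.Icc (0 : ℝ) γ₀, 0 < θf γ ∧ Pq γ (θf γ) = 0 ∧
        ∀ t : ℝ, 0 < t → Pq γ t = 0 → t = θf γ) ∧
      Filter.Tendsto θf (nhdsWithin 0 (Set.Ioi 0)) (nhds (Real.sqrt 3))) := by
  have hPq0 : ∀ θ : ℝ, Pq 0 θ = θ * (θ ^ 2 + 1) * (3 - θ ^ 2) := by
    intro θ
    unfold Pq
    rw [Real.sqrt_zero]
    ring
  have h3 : (Real.sqrt 3)^2 = 3 := Real.sq_sqrt (by norm_num)
  refine ⟨hPq0, ⟨?_, ?_⟩, ?_⟩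
  · rw [hPq0, h3]; ring
  · intro θ hθ hPθ
    rw [hPq0] at hPθ
    have hθ2 : θ^2 = 3 := by
      rcases mul_eq_zero.1 hPθ with h | h
      · rcases mul_eq_zero.1 h with h' | h'
        · exact absurd h' (ne_of_gt hθ)
        · nlinarith
      · linarith
    rw [← Real.sqrt_sq hθ.le, hθ2]
  · refine ⟨1/100, by norm_num, thf, ?_, ?_⟩
    · intro γ hγ
      have hfac : 0 < (thf γ)^2 + Real.sqrt γ * (thf γ) + 1 := by
        have := thf_pos γ
        have := Real.sqrt_nonneg γ
        nlinarith
      refine ⟨thf_pos γ, ?_, ?_⟩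
      · rw [Pq_factor, (thf_spec γ).1.2, mul_zero]
      · intro t ht hPt
        rw [Pq_factor] at hPt
        have htfac : 0 < t^2 + Real.sqrt γ * t + 1 := by
          have := Real.sqrt_nonneg γ
          nlinarith
        have hq : qc (Real.sqrt γ) t = 0 := by
          rcases mul_eq_zero.1 hPt with h | h
          · exact absurd h (ne_of_gt htfac)
          · exact h
        exact (thf_spec γ).2 t ht hq
    · have hup : Filter.Tendsto (fun γ => Real.sqrt 3 + 4 * Real.sqrt γ)
          (nhdsWithin 0 (Set.Ioi 0)) (nhds (Real.sqrt 3)) := by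
        have h : Filter.Tendsto (fun γ : ℝ => Real.sqrt 3 + 4 * Real.sqrt γ)
            (nhds 0) (nhds (Real.sqrt 3 + 4 * Real.sqrt 0)) :=
          Continuous.tendsto (by fun_prop) 0
        simp only [Real.sqrt_zero, mul_zero, add_zero] at h
        exact h.mono_left nhdsWithin_le_nhds
      refine tendsto_of_tendsto_of_tendsto_of_le_of_le' tendsto_const_nhds hup ?_ ?_
      · exact Filter.Eventually.of_forall (fun γ => thf_ge γ)
      · filter_upwards [Ioo_mem_nhdsGT_of_mem
          (show (0:ℝ) ∈ Set.Ico (0:ℝ) (1/100) by norm_num)] with γ hγ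
        exact thf_lt γ hγ.1 hγ.2.le
end
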